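/- arXiv:2506.08794 — 2 statements merged into one kernel-verified Lean document; each statement's English description precedes it below -/
import Mathlib

section
/- For λ ∈ ℂ*, α ∈ ℂ and h(t) ∈ ℂ[t], the actions L_n·(s^p t^q) = λⁿ(s−n)^p (s t^q + n G(t^q) − n²α F(t^q)), W_n·(s^p t^q) = λⁿ(t − nα)(s−n)^p t^q, C·(s^p t^q) = 0, define a W(2,2)-module structure on ℂ[s,t]. -/
open Polynomial TensorProduct

/-- Basis index set for the W-algebra W(2,2): elements `L n`, `W n` (n ∈ ℤ) and a central `C`. -/
inductive WIdx : Type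
  | L : ℤ → WIdx
  | W : ℤ → WIdx
  | C : WIdx

/-- The central-term coefficient δ_{m+n,0}·(m³−m)/12. -/
noncomputable def deltaC (m n : ℤ) : ℂ := if m + n = 0 then ((m : ℂ)^3 - (m : ℂ))/12 else 0

/-- A representation of the W-algebra W(2,2) on a complex vector space `M`,
given by operators for each basis element satisfying the bracket relations. -/
structure WRep (M : Type*) [AddCommGroup M] [Module ℂ M] where
  ρ : WIdx → Module.End ℂ M
  rel_LL : ∀ m n : ℤ, ρ (.L m) * ρ (.L n) - ρ (.L n) * ρ (.L m)
      = ((n : ℂ) - (m : ℂ)) • ρ (.L (m + n)) + deltaC m n • ρ .C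
  rel_LW : ∀ m n : ℤ, ρ (.L m) * ρ (.W n) - ρ (.W n) * ρ (.L m)
      = ((n : ℂ) - (m : ℂ)) • ρ (.W (m + n)) + deltaC m n • ρ .C
  rel_WW : ∀ m n : ℤ, ρ (.W m) * ρ (.W n) = ρ (.W n) * ρ (.W m)
  rel_C : ∀ x, ρ .C * ρ x = ρ x * ρ .C

/-- A subspace invariant under all the operators of a representation. -/
def WInvariant {M : Type*} [AddCommGroup M] [Module ℂ M]
    (ρ : WIdx → Module.End ℂ M) (N : Submodule ℂ M) : Prop :=
  ∀ b : WIdx, ∀ x ∈ N, ρ b x ∈ N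

/-- Simplicity: the module is nonzero and has no nonzero proper invariant subspaces. -/
def WSimple {M : Type*} [AddCommGroup M] [Module ℂ M]
    (ρ : WIdx → Module.End ℂ M) : Prop :=
  (∃ x : M, x ≠ 0) ∧ ∀ N : Submodule ℂ M, WInvariant ρ N → N = ⊥ ∨ N = ⊤

/-- Module homomorphisms: linear maps intertwining the two actions. -/
def WHom {M N : Type*} [AddCommGroup M] [Module ℂ M] [AddCommGroup N] [Module ℂ N]
    (ρM : WIdx → Module.End ℂ M) (ρN : WIdx → Module.End ℂ N) (φ : M →ₗ[ℂ] N) : Prop :=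
  ∀ b : WIdx, ∀ x : M, φ (ρM b x) = ρN b (φ x)

/-- Restricted module: every vector is killed by `L n` and `W n` for all sufficiently large `n`. -/
def WRestricted {M : Type*} [AddCommGroup M] [Module ℂ M]
    (ρ : WIdx → Module.End ℂ M) : Prop :=
  ∀ x : M, ∃ N : ℤ, ∀ n : ℤ, N ≤ n → ρ (.L n) x = 0 ∧ ρ (.W n) x = 0

/-- The substitution operator f(s) ↦ f(s − n) on ℂ[s]. -/
noncomputable def shiftMap (n : ℤ) : Module.End ℂ (Polynomial ℂ) :=
  (Polynomial.aeval (Polynomial.X - Polynomial.C (n : ℂ))).toLinearMap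

/-- The action of W(2,2) on Ω(λ,α) = ℂ[s]:
`L n · f(s) = λⁿ (s − nα) f(s − n)`, `W n` and `C` act by zero. -/
noncomputable def omegaRho (lam alpha : ℂ) : WIdx → Module.End ℂ (Polynomial ℂ)
  | .L n => (lam ^ n) •
      ((LinearMap.mulLeft ℂ (Polynomial.X - Polynomial.C ((n : ℂ) * alpha))) ∘ₗ shiftMap n)
  | .W _ => 0
  | .C => 0

/-- g(t) = (h(t) − h(α))/(t − α) as an exact polynomial quotient. -/
noncomputable def gPoly (alpha : ℂ) (h : Polynomial ℂ) : Polynomial ℂ :=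
  (h - Polynomial.C (h.eval alpha)) /ₘ (Polynomial.X - Polynomial.C alpha)

/-- F(f) = g·f − f′. -/
noncomputable def Fmap (alpha : ℂ) (h : Polynomial ℂ) : Module.End ℂ (Polynomial ℂ) :=
  LinearMap.mulLeft ℂ (gPoly alpha h) - (Polynomial.derivative : Polynomial ℂ →ₗ[ℂ] Polynomial ℂ)

/-- G(f) = t·F(f) + h(α)·f. -/
noncomputable def Gmap (alpha : ℂ) (h : Polynomial ℂ) : Module.End ℂ (Polynomial ℂ) :=
  (LinearMap.mulLeft ℂ (Polynomial.X : Polynomial ℂ)) ∘ₗ Fmap alpha h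
    + (h.eval alpha) • (LinearMap.id : Polynomial ℂ →ₗ[ℂ] Polynomial ℂ)

/-- The action of W(2,2) on Ω(λ,α,h) = ℂ[s,t], realized as ℂ[s] ⊗ ℂ[t]:
`L n·(s^p t^q) = λⁿ(s−n)^p (s t^q + n G(t^q) − n²α F(t^q))`,
`W n·(s^p t^q) = λⁿ(t−nα)(s−n)^p t^q`, `C` acts by zero. -/
noncomputable def omegaHRho (lam alpha : ℂ) (h : Polynomial ℂ) :
    WIdx → Module.End ℂ (TensorProduct ℂ (Polynomial ℂ) (Polynomial ℂ))
  | .L n => (lam ^ n) •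
      (TensorProduct.map ((LinearMap.mulLeft ℂ (Polynomial.X : Polynomial ℂ)) ∘ₗ shiftMap n) LinearMap.id
        + (n : ℂ) • TensorProduct.map (shiftMap n) (Gmap alpha h)
        - ((n : ℂ)^2 * alpha) • TensorProduct.map (shiftMap n) (Fmap alpha h))
  | .W n => (lam ^ n) •
      TensorProduct.map (shiftMap n)
        (LinearMap.mulLeft ℂ (Polynomial.X - Polynomial.C ((n : ℂ) * alpha)))
  | .C => 0

-- Auxiliary lemmas

lemma shiftMap_apply (n : ℤ) (f : Polynomial ℂ) :
    shiftMap n f = f.comp (X - C (n : ℂ)) := by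
  simp [shiftMap, Polynomial.aeval_def, Polynomial.comp, Polynomial.algebraMap_eq]

lemma shift_shift (m n : ℤ) (f : Polynomial ℂ) :
    shiftMap m (shiftMap n f) = shiftMap (m + n) f := by
  simp only [shiftMap_apply, Polynomial.comp_assoc]
  congr 1
  simp only [sub_comp, X_comp, C_comp]
  rw [Int.cast_add, C_add]
  ring_nf

lemma shift_X (n : ℤ) (f : Polynomial ℂ) :
    shiftMap n (X * f) = X * shiftMap n f - (n : ℂ) • shiftMap n f := by
  simp only [shiftMap_apply, mul_comp, X_comp, smul_eq_C_mul]
  ring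

lemma Fmap_apply (alpha : ℂ) (h f : Polynomial ℂ) :
    Fmap alpha h f = gPoly alpha h * f - derivative f := rfl

lemma Gmap_apply (alpha : ℂ) (h f : Polynomial ℂ) :
    Gmap alpha h f = X * Fmap alpha h f + h.eval alpha • f := rfl

lemma Fmap_X (alpha : ℂ) (h f : Polynomial ℂ) :
    Fmap alpha h (X * f) = X * Fmap alpha h f - f := by
  simp only [Fmap_apply, derivative_mul, derivative_X]
  ring

lemma Gmap_X (alpha : ℂ) (h f : Polynomial ℂ) :
    Gmap alpha h (X * f) = X * Gmap alpha h f - X * f := by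
  simp only [Gmap_apply, Fmap_X, smul_eq_C_mul]
  ring

lemma Fmap_Gmap (alpha : ℂ) (h f : Polynomial ℂ) :
    Fmap alpha h (Gmap alpha h f) = Gmap alpha h (Fmap alpha h f) - Fmap alpha h f := by
  conv_lhs => rw [Gmap_apply, map_add, map_smul, Fmap_X]
  rw [Gmap_apply]
  abel

lemma relWW (lam alpha : ℂ) (h : Polynomial ℂ) (m n : ℤ) :
    omegaHRho lam alpha h (.W m) * omegaHRho lam alpha h (.W n)
      = omegaHRho lam alpha h (.W n) * omegaHRho lam alpha h (.W m) := by
  refine TensorProduct.ext' fun x y => ?_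
  simp only [omegaHRho, Module.End.mul_apply, LinearMap.smul_apply, map_smul,
    TensorProduct.map_tmul, LinearMap.mulLeft_apply, shift_shift]
  rw [show n + m = m + n from add_comm n m, smul_comm]
  congr 2
  ring_nf

lemma relC (lam alpha : ℂ) (h : Polynomial ℂ) (x : WIdx) :
    omegaHRho lam alpha h .C * omegaHRho lam alpha h x
      = omegaHRho lam alpha h x * omegaHRho lam alpha h .C := by
  show (0 : Module.End ℂ _) * _ = _ * 0
  rw [zero_mul, mul_zero]

lemma relLW (lam alpha : ℂ) (hlam : lam ≠ 0) (h : Polynomial ℂ) (m n : ℤ) :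
    omegaHRho lam alpha h (.L m) * omegaHRho lam alpha h (.W n)
      - omegaHRho lam alpha h (.W n) * omegaHRho lam alpha h (.L m)
      = ((n : ℂ) - (m : ℂ)) • omegaHRho lam alpha h (.W (m + n))
        + deltaC m n • omegaHRho lam alpha h .C := by
  refine TensorProduct.ext' fun x y => ?_
  simp only [omegaHRho, LinearMap.sub_apply, LinearMap.add_apply, Module.End.mul_apply,
    LinearMap.smul_apply, LinearMap.zero_apply, smul_zero, add_zero,
    map_smul, map_add, map_sub,
    TensorProduct.map_tmul, LinearMap.comp_apply, LinearMap.id_apply, LinearMap.mulLeft_apply,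
    shift_shift, shift_X, Fmap_X, Gmap_X, Fmap_Gmap,
    sub_mul, mul_sub, mul_add, ← smul_eq_C_mul, Int.cast_add,
    TensorProduct.add_tmul, TensorProduct.sub_tmul, TensorProduct.tmul_add,
    TensorProduct.tmul_sub, ← TensorProduct.smul_tmul', TensorProduct.tmul_smul,
    smul_sub, smul_add, mul_smul_comm]
  rw [zpow_add₀ hlam, show n+m = m+n from add_comm n m]
  module

lemma relLL (lam alpha : ℂ) (hlam : lam ≠ 0) (h : Polynomial ℂ) (m n : ℤ) :
    omegaHRho lam alpha h (.L m) * omegaHRho lam alpha h (.L n)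
      - omegaHRho lam alpha h (.L n) * omegaHRho lam alpha h (.L m)
      = ((n : ℂ) - (m : ℂ)) • omegaHRho lam alpha h (.L (m + n))
        + deltaC m n • omegaHRho lam alpha h .C := by
  refine TensorProduct.ext' fun x y => ?_
  simp only [omegaHRho, LinearMap.sub_apply, LinearMap.add_apply, Module.End.mul_apply,
    LinearMap.smul_apply, LinearMap.zero_apply, smul_zero, add_zero,
    map_smul, map_add, map_sub,
    TensorProduct.map_tmul, LinearMap.comp_apply, LinearMap.id_apply, LinearMap.mulLeft_apply,
    shift_shift, shift_X, Fmap_X, Gmap_X, Fmap_Gmap,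
    sub_mul, mul_sub, mul_add, ← smul_eq_C_mul, Int.cast_add,
    TensorProduct.add_tmul, TensorProduct.sub_tmul, TensorProduct.tmul_add,
    TensorProduct.tmul_sub, ← TensorProduct.smul_tmul', TensorProduct.tmul_smul,
    smul_sub, smul_add, mul_smul_comm]
  rw [zpow_add₀ hlam, show n+m = m+n from add_comm n m]
  module

/-- For λ ∈ ℂ*, α ∈ ℂ and h ∈ ℂ[t], the actions
`L n·(s^p t^q) = λⁿ(s−n)^p(s t^q + n G(t^q) − n²α F(t^q))`,
`W n·(s^p t^q) = λⁿ(t−nα)(s−n)^p t^q`, `C = 0`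
define a W(2,2)-module structure Ω(λ,α,h) on ℂ[s,t]. -/
theorem omegaH_is_module (lam alpha : ℂ) (hlam : lam ≠ 0) (h : Polynomial ℂ) :
    ∃ R : WRep (TensorProduct ℂ (Polynomial ℂ) (Polynomial ℂ)),
      R.ρ = omegaHRho lam alpha h :=
  ⟨⟨omegaHRho lam alpha h, relLL lam alpha hlam h, relLW lam alpha hlam h,
    relWW lam alpha h, relC lam alpha h⟩, rfl⟩
end

section
/- Let m ≥ 2 and T = ⊗_{k=1}^m Ω(λ_k,α_k,h_k) ⊗ V with λ_k pairwise distinct in ℂ*, α_k ∈ ℂ*, V simple restricted. Then for any v ∈ V and any α ∈ ℂ*, the element Q·(1⊗⋯⊗1⊗v) with Q = α^{−2}(W₀² − W_{−1}W₁) differs from 1⊗⋯⊗1⊗v; in fact, identifying T with V[s₁,…,s_m,t₁,…,t_m], the coefficient of t₁t₂ in Q·(1⊗⋯⊗1⊗v) equals α^{−2}(2 − λ₁λ₂^{−1} − λ₂λ₁^{−1})·v, which is nonzero when v ≠ 0 since λ₁ ≠ λ₂. Consequently T is not isomorphic to any module Ω(λ,α,h) when m ≥ 2. -/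
open Polynomial TensorProduct

/-- Variables s₁,…,s_m (left) and t₁,…,t_m (right). -/
abbrev WVars (m : ℕ) := Fin m ⊕ Fin m

/-- Linear map on multivariate polynomials defined by its values on monomials. -/
noncomputable def mkLin {σ : Type*} {M : Type*} [AddCommGroup M] [Module ℂ M]
    (φ : (σ →₀ ℕ) → M) : MvPolynomial σ ℂ →ₗ[ℂ] M :=
  ((MvPolynomial.basisMonomials σ ℂ).constr ℂ) φ

/-- The part of the monomial `d` in the variables other than s_k, t_k. -/
noncomputable def others {m : ℕ} (k : Fin m) (d : WVars m →₀ ℕ) : MvPolynomial (WVars m) ℂ :=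
  MvPolynomial.monomial ((d.erase (Sum.inl k)).erase (Sum.inr k)) 1

/-- Action of `W n` on the k-th tensor factor Ω(λ_k,α_k,h_k) inside ℂ[s₁,…,s_m,t₁,…,t_m]. -/
noncomputable def siteW {m : ℕ} (lam alpha : Fin m → ℂ) (n : ℤ) (k : Fin m) :
    Module.End ℂ (MvPolynomial (WVars m) ℂ) :=
  mkLin fun d => (lam k ^ n) •
    ((MvPolynomial.X (Sum.inr k) - MvPolynomial.C ((n : ℂ) * alpha k)) *
      (MvPolynomial.X (Sum.inl k) - MvPolynomial.C (n : ℂ)) ^ (d (Sum.inl k)) *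
      MvPolynomial.X (Sum.inr k) ^ (d (Sum.inr k)) * others k d)

/-- Action of `L n` on the k-th tensor factor Ω(λ_k,α_k,h_k) inside ℂ[s₁,…,s_m,t₁,…,t_m]. -/
noncomputable def siteL {m : ℕ} (lam alpha : Fin m → ℂ) (h : Fin m → Polynomial ℂ)
    (n : ℤ) (k : Fin m) : Module.End ℂ (MvPolynomial (WVars m) ℂ) :=
  mkLin fun d => (lam k ^ n) •
    ((MvPolynomial.X (Sum.inl k) - MvPolynomial.C (n : ℂ)) ^ (d (Sum.inl k)) * others k d *
      (MvPolynomial.X (Sum.inl k) * MvPolynomial.X (Sum.inr k) ^ (d (Sum.inr k))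
        + (n : ℂ) • Polynomial.aeval (MvPolynomial.X (Sum.inr k) : MvPolynomial (WVars m) ℂ)
            (Gmap (alpha k) (h k) (Polynomial.X ^ (d (Sum.inr k))))
        - ((n : ℂ)^2 * alpha k) • Polynomial.aeval (MvPolynomial.X (Sum.inr k) : MvPolynomial (WVars m) ℂ)
            (Fmap (alpha k) (h k) (Polynomial.X ^ (d (Sum.inr k))))))

/-- The diagonal action of W(2,2) on the tensor product module
T = Ω(λ₁,α₁,h₁) ⊗ ⋯ ⊗ Ω(λ_m,α_m,h_m) ⊗ V, with the polynomial factors realized as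
ℂ[s₁,…,s_m,t₁,…,t_m] and `ρV` the action on `V`. -/
noncomputable def bigRho {m : ℕ} {V : Type*} [AddCommGroup V] [Module ℂ V]
    (lam alpha : Fin m → ℂ) (h : Fin m → Polynomial ℂ) (ρV : WIdx → Module.End ℂ V) :
    WIdx → Module.End ℂ (TensorProduct ℂ (MvPolynomial (WVars m) ℂ) V)
  | .L n => (∑ k : Fin m, TensorProduct.map (siteL lam alpha h n k) LinearMap.id)
      + TensorProduct.map LinearMap.id (ρV (.L n))
  | .W n => (∑ k : Fin m, TensorProduct.map (siteW lam alpha n k) LinearMap.id)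
      + TensorProduct.map LinearMap.id (ρV (.W n))
  | .C => TensorProduct.map LinearMap.id (ρV .C)

/-- Carrier of the tensor product module T = Ω(λ₁,α₁,h₁) ⊗ ⋯ ⊗ Ω(λ_m,α_m,h_m) ⊗ V. -/
abbrev TMod (m : ℕ) (V : Type*) [AddCommGroup V] [Module ℂ V] :=
  TensorProduct ℂ (MvPolynomial (WVars m) ℂ) V

/-- The coefficient-extraction linear map f ↦ coeff d f on multivariate polynomials. -/
noncomputable def coeffLin {σ : Type*} (d : σ →₀ ℕ) : MvPolynomial σ ℂ →ₗ[ℂ] ℂ where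
  toFun f := MvPolynomial.coeff d f
  map_add' f g := by simp
  map_smul' c f := by simp

/-- The coefficient of the monomial d (in the polynomial part) of an element of
T = ℂ[s₁,…,s_m,t₁,…,t_m] ⊗ V, as a vector of V. -/
noncomputable def coefV {m : ℕ} {V : Type*} [AddCommGroup V] [Module ℂ V]
    (d : WVars m →₀ ℕ) : TMod m V →ₗ[ℂ] V :=
  (TensorProduct.lid ℂ V).toLinearMap ∘ₗ TensorProduct.map (coeffLin d) LinearMap.id

lemma mkLin_monomial {σ : Type*} {M : Type*} [AddCommGroup M] [Module ℂ M]
    (φ : (σ →₀ ℕ) → M) (d : σ →₀ ℕ) :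
    mkLin φ (MvPolynomial.monomial d 1) = φ d := by
  have h := (MvPolynomial.basisMonomials σ ℂ).constr_basis ℂ φ d
  rwa [show (MvPolynomial.basisMonomials σ ℂ) d = MvPolynomial.monomial d 1 by
    rw [MvPolynomial.coe_basisMonomials]] at h

lemma siteW_one {m : ℕ} (lam alpha : Fin m → ℂ) (n : ℤ) (k : Fin m) :
    siteW lam alpha n k 1
      = (lam k ^ n) • (MvPolynomial.X (Sum.inr k) - MvPolynomial.C ((n : ℂ) * alpha k)) := by
  rw [show (1 : MvPolynomial (WVars m) ℂ) = MvPolynomial.monomial 0 1 by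
    simp [MvPolynomial.monomial_zero']]
  rw [siteW, mkLin_monomial]
  simp [others, MvPolynomial.monomial_zero']

lemma siteW_X {m : ℕ} (lam alpha : Fin m → ℂ) (n : ℤ) (k j : Fin m) :
    siteW lam alpha n k (MvPolynomial.X (Sum.inr j))
      = (lam k ^ n) • ((MvPolynomial.X (Sum.inr k) - MvPolynomial.C ((n : ℂ) * alpha k))
          * MvPolynomial.X (Sum.inr j)) := by
  rw [show (MvPolynomial.X (Sum.inr j) : MvPolynomial (WVars m) ℂ)
        = MvPolynomial.monomial (Finsupp.single (Sum.inr j) 1) 1 from rfl]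
  rw [siteW, mkLin_monomial]
  by_cases hkj : k = j
  · subst hkj
    simp [others, Finsupp.single_apply, MvPolynomial.X, mul_assoc]
  · have h3 : others k (Finsupp.single (Sum.inr j) 1) = MvPolynomial.X (Sum.inr j) := by
      rw [others, Finsupp.erase_single_ne (by simp : (Sum.inl k : WVars m) ≠ Sum.inr j),
        Finsupp.erase_single_ne (by simpa using hkj : (Sum.inr k : WVars m) ≠ Sum.inr j)]
      rfl
    have h2 : (Finsupp.single (Sum.inr j) 1 : WVars m →₀ ℕ) (Sum.inr k) = 0 := by
      simp [Finsupp.single_apply, Ne.symm hkj]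
    have h1 : (Finsupp.single (Sum.inr j) 1 : WVars m →₀ ℕ) (Sum.inl k) = 0 := by
      simp [Finsupp.single_apply]
    rw [h3]
    simp only [h1, h2, pow_zero, mul_one, one_mul]
    rfl
lemma pair_single_eq {β : Type*} [DecidableEq β] {a b c d : β} (hcd : c ≠ d) :
    (Finsupp.single a 1 + Finsupp.single b 1 : β →₀ ℕ)
      = Finsupp.single c 1 + Finsupp.single d 1
    ↔ (a = c ∧ b = d) ∨ (a = d ∧ b = c) := by
  constructor
  · intro hEq
    by_cases hac : a = c
    · subst hac
      left
      refine ⟨rfl, ?_⟩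
      have h := DFunLike.congr_fun hEq d
      simp only [Finsupp.add_apply, Finsupp.single_apply] at h
      split_ifs at h <;> simp_all
    · by_cases had : a = d
      · subst had
        right
        refine ⟨rfl, ?_⟩
        have h := DFunLike.congr_fun hEq c
        simp only [Finsupp.add_apply, Finsupp.single_apply] at h
        split_ifs at h <;> simp_all
      · exfalso
        have h := DFunLike.congr_fun hEq a
        simp only [Finsupp.add_apply, Finsupp.single_apply] at h
        split_ifs at h <;> simp_all
  · rintro (⟨rfl, rfl⟩ | ⟨rfl, rfl⟩)
    · rfl
    · exact add_comm _ _
section coeffs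
variable {m : ℕ} (i0 i1 : Fin m)

/-- abbreviation for the exponent t_{i0} t_{i1} -/
noncomputable def Dex (i0 i1 : Fin m) : WVars m →₀ ℕ :=
  Finsupp.single (Sum.inr i0) 1 + Finsupp.single (Sum.inr i1) 1

lemma Dex_ne_zero (hne : i0 ≠ i1) : Dex i0 i1 ≠ (0 : WVars m →₀ ℕ) := by
  intro hc
  have := DFunLike.congr_fun hc (Sum.inr i0)
  simp only [Dex, Finsupp.add_apply, Finsupp.single_apply, Finsupp.coe_zero, Pi.zero_apply] at this
  split_ifs at this <;> omega

lemma Dex_ne_single (hne : i0 ≠ i1) (r : WVars m) :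
    (Finsupp.single r 1 : WVars m →₀ ℕ) ≠ Dex i0 i1 := by
  intro hc
  by_cases h0 : r = Sum.inr i0
  · subst h0
    have := DFunLike.congr_fun hc (Sum.inr i1)
    simp only [Dex, Finsupp.add_apply, Finsupp.single_apply] at this
    split_ifs at this <;> omega
  · have := DFunLike.congr_fun hc (Sum.inr i0)
    simp only [Dex, Finsupp.add_apply, Finsupp.single_apply] at this
    split_ifs at this <;> first | omega | contradiction

lemma coeff_Dex_one (hne : i0 ≠ i1) :
    MvPolynomial.coeff (Dex i0 i1) (1 : MvPolynomial (WVars m) ℂ) = 0 := by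
  classical
  rw [MvPolynomial.coeff_one, if_neg (fun hc => Dex_ne_zero i0 i1 hne hc.symm)]

lemma coeff_Dex_X (hne : i0 ≠ i1) (r : WVars m) :
    MvPolynomial.coeff (Dex i0 i1) (MvPolynomial.X r : MvPolynomial (WVars m) ℂ) = 0 := by
  classical
  rw [MvPolynomial.coeff_X', if_neg (Dex_ne_single i0 i1 hne r)]

lemma coeff_Dex_XX (hne : i0 ≠ i1) (k j : Fin m) :
    MvPolynomial.coeff (Dex i0 i1)
      (MvPolynomial.X (Sum.inr k) * MvPolynomial.X (Sum.inr j) : MvPolynomial (WVars m) ℂ)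
    = (if k = i0 ∧ j = i1 then 1 else 0) + (if k = i1 ∧ j = i0 then 1 else 0) := by
  classical
  rw [show (MvPolynomial.X (Sum.inr k) * MvPolynomial.X (Sum.inr j) : MvPolynomial (WVars m) ℂ)
      = MvPolynomial.monomial (Finsupp.single (Sum.inr k) 1 + Finsupp.single (Sum.inr j) 1) 1 by
    rw [show (MvPolynomial.X (Sum.inr k) : MvPolynomial (WVars m) ℂ)
        = MvPolynomial.monomial (Finsupp.single (Sum.inr k) 1) 1 from rfl,
      show (MvPolynomial.X (Sum.inr j) : MvPolynomial (WVars m) ℂ)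
        = MvPolynomial.monomial (Finsupp.single (Sum.inr j) 1) 1 from rfl,
      MvPolynomial.monomial_mul, mul_one]]
  rw [MvPolynomial.coeff_monomial]
  have hp : (Finsupp.single (Sum.inr k) 1 + Finsupp.single (Sum.inr j) 1 = Dex i0 i1)
      ↔ ((k = i0 ∧ j = i1) ∨ (k = i1 ∧ j = i0)) := by
    rw [Dex, pair_single_eq (by simpa using hne)]
    simp
  simp only [hp]
  by_cases h1 : k = i0 ∧ j = i1
  · obtain ⟨rfl, rfl⟩ := h1
    simp [hne, Ne.symm hne]
  · by_cases h2 : k = i1 ∧ j = i0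
    · obtain ⟨rfl, rfl⟩ := h2
      simp [hne, Ne.symm hne]
    · rw [if_neg (by tauto), if_neg h1, if_neg h2]
      norm_num

end coeffs
lemma siteW_C {m : ℕ} (lam alpha : Fin m → ℂ) (n : ℤ) (k : Fin m) (c : ℂ) :
    siteW lam alpha n k (MvPolynomial.C c)
      = c • ((lam k ^ n) • (MvPolynomial.X (Sum.inr k)
          - MvPolynomial.C ((n : ℂ) * alpha k))) := by
  rw [show (MvPolynomial.C c : MvPolynomial (WVars m) ℂ) = c • 1 by
      rw [MvPolynomial.smul_eq_C_mul, mul_one],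
    map_smul, siteW_one]

lemma key {m : ℕ} (lam alpha : Fin m → ℂ) (i0 i1 : Fin m) (hne : i0 ≠ i1) (n n' : ℤ) :
    MvPolynomial.coeff (Dex i0 i1)
      (∑ k : Fin m, siteW lam alpha n' k
        (∑ j : Fin m, siteW lam alpha n j (1 : MvPolynomial (WVars m) ℂ)))
    = lam i1 ^ n * lam i0 ^ n' + lam i0 ^ n * lam i1 ^ n' := by
  classical
  have hstep : ∀ k : Fin m, siteW lam alpha n' k
        (∑ j : Fin m, siteW lam alpha n j (1 : MvPolynomial (WVars m) ℂ))
      = ∑ j : Fin m, ((lam j ^ n) • (siteW lam alpha n' k (MvPolynomial.X (Sum.inr j))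
          - ((n : ℂ) * alpha j) • siteW lam alpha n' k 1)) := by
    intro k
    rw [Finset.sum_congr rfl (fun j _ => siteW_one lam alpha n j), map_sum]
    refine Finset.sum_congr rfl (fun j _ => ?_)
    rw [map_smul, map_sub, siteW_C, siteW_one]
  have hC : ∀ c : ℂ, MvPolynomial.coeff (Dex i0 i1) (MvPolynomial.C c : MvPolynomial (WVars m) ℂ) = 0 :=
    fun c => by rw [MvPolynomial.coeff_C, if_neg (fun hh => Dex_ne_zero i0 i1 hne hh.symm)]
  rw [MvPolynomial.coeff_sum, Finset.sum_congr rfl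
    (fun k _ => congrArg (MvPolynomial.coeff (Dex i0 i1)) (hstep k))]
  simp only [siteW_X, siteW_one, hC, MvPolynomial.coeff_sum, MvPolynomial.coeff_smul,
    MvPolynomial.coeff_sub, sub_mul, MvPolynomial.coeff_C_mul, coeff_Dex_X i0 i1 hne,
    coeff_Dex_XX i0 i1 hne, smul_eq_mul, mul_zero, sub_zero, zero_sub, mul_neg, neg_zero,
    mul_add]
  simp only [mul_ite, ite_and, mul_one, mul_zero, Finset.sum_add_distrib,
    Finset.sum_ite_eq', Finset.mem_univ, if_true, sub_zero, mul_add, neg_zero, sub_neg_eq_add,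
    add_zero, zero_add]
  rw [Finset.sum_comm]
  nth_rewrite 2 [Finset.sum_comm]
  simp only [Finset.sum_ite_eq', Finset.mem_univ, if_true]
lemma bigW_tmul {m : ℕ} {V : Type*} [AddCommGroup V] [Module ℂ V]
    (lam alpha : Fin m → ℂ) (h : Fin m → Polynomial ℂ) (ρ : WIdx → Module.End ℂ V)
    (n : ℤ) (p : MvPolynomial (WVars m) ℂ) (v : V) :
    bigRho lam alpha h ρ (.W n) (p ⊗ₜ[ℂ] v)
      = (∑ k : Fin m, siteW lam alpha n k p) ⊗ₜ[ℂ] v + p ⊗ₜ[ℂ] (ρ (.W n) v) := by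
  simp [bigRho, LinearMap.sum_apply, TensorProduct.map_tmul, TensorProduct.sum_tmul]

lemma coefV_tmul {m : ℕ} {V : Type*} [AddCommGroup V] [Module ℂ V]
    (d : WVars m →₀ ℕ) (p : MvPolynomial (WVars m) ℂ) (v : V) :
    coefV d (p ⊗ₜ[ℂ] v) = MvPolynomial.coeff d p • v := by
  simp [coefV, coeffLin, TensorProduct.map_tmul]

lemma coeff_P {m : ℕ} (lam alpha : Fin m → ℂ) (i0 i1 : Fin m) (hne : i0 ≠ i1) (n : ℤ) :
    MvPolynomial.coeff (Dex i0 i1)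
      (∑ j : Fin m, siteW lam alpha n j (1 : MvPolynomial (WVars m) ℂ)) = 0 := by
  have hC : ∀ c : ℂ, MvPolynomial.coeff (Dex i0 i1) (MvPolynomial.C c : MvPolynomial (WVars m) ℂ) = 0 :=
    fun c => by rw [MvPolynomial.coeff_C, if_neg (fun hh => Dex_ne_zero i0 i1 hne hh.symm)]
  simp only [siteW_one, MvPolynomial.coeff_sum, MvPolynomial.coeff_smul,
    MvPolynomial.coeff_sub, coeff_Dex_X i0 i1 hne, hC, smul_eq_mul, mul_zero, sub_zero,
    zero_sub, neg_zero, Finset.sum_const_zero]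

lemma WW_coefV {m : ℕ} {V : Type*} [AddCommGroup V] [Module ℂ V]
    (lam alpha : Fin m → ℂ) (h : Fin m → Polynomial ℂ) (ρ : WIdx → Module.End ℂ V)
    (i0 i1 : Fin m) (hne : i0 ≠ i1) (n n' : ℤ) (v : V) :
    coefV (Dex i0 i1) (bigRho lam alpha h ρ (.W n') (bigRho lam alpha h ρ (.W n)
        ((1 : MvPolynomial (WVars m) ℂ) ⊗ₜ[ℂ] v)))
      = (lam i1 ^ n * lam i0 ^ n' + lam i0 ^ n * lam i1 ^ n') • v := by
  rw [bigW_tmul, map_add, bigW_tmul, bigW_tmul]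
  simp only [map_add, coefV_tmul]
  rw [key lam alpha i0 i1 hne n n', coeff_P lam alpha i0 i1 hne,
    coeff_P lam alpha i0 i1 hne,
    MvPolynomial.coeff_one, if_neg (fun hh => Dex_ne_zero i0 i1 hne hh.symm)]
  simp

lemma shiftMap_shiftMap (a b : ℤ) (f : Polynomial ℂ) :
    shiftMap a (shiftMap b f) = shiftMap (a + b) f := by
  simp only [shiftMap, AlgHom.toLinearMap_apply, ← Polynomial.comp_eq_aeval,
    Polynomial.comp_assoc]
  congr 1
  rw [Polynomial.sub_comp, Polynomial.X_comp, Polynomial.C_comp]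
  push_cast [Polynomial.C_add]
  ring

lemma shiftMap_zero (f : Polynomial ℂ) : shiftMap 0 f = f := by
  simp [shiftMap]

lemma omegaQ (lam' alpha' : ℂ) (hl : lam' ≠ 0) (h' : Polynomial ℂ)
    (y : TensorProduct ℂ (Polynomial ℂ) (Polynomial ℂ)) :
    omegaHRho lam' alpha' h' (.W 0) (omegaHRho lam' alpha' h' (.W 0) y)
      - omegaHRho lam' alpha' h' (.W (-1)) (omegaHRho lam' alpha' h' (.W 1) y)
    = (alpha' ^ 2) • y := by
  induction y using TensorProduct.induction_on with
  | zero => simp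
  | add x y hx hy =>
      rw [map_add, map_add, map_add, map_add, smul_add, ← hx, ← hy]
      abel
  | tmul f g =>
      simp only [omegaHRho, LinearMap.smul_apply, TensorProduct.map_tmul,
        LinearMap.map_smul_of_tower, TensorProduct.map_tmul, zpow_zero, one_smul,
        zpow_one, zpow_neg_one, Int.cast_zero, Int.cast_one, Int.cast_neg,
        LinearMap.mulLeft_apply, zero_mul, Polynomial.C_0, sub_zero,
        shiftMap_zero]
      rw [shiftMap_shiftMap]
      norm_num
      rw [shiftMap_zero, smul_smul, inv_mul_cancel₀ hl, one_smul]
      rw [← TensorProduct.tmul_sub,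
        show (alpha' ^ 2) • (f ⊗ₜ[ℂ] g) = f ⊗ₜ[ℂ] (Polynomial.C (alpha' ^ 2) * g) by
          rw [← Polynomial.smul_eq_C_mul, TensorProduct.tmul_smul],
        map_pow]
      congr 1
      ring
/-- For m ≥ 2 and T = ⊗_k Ω(λ_k,α_k,h_k) ⊗ V (λ_k pairwise distinct in ℂ*, α_k ∈ ℂ*,
V simple restricted): for any α ∈ ℂ*, with Q = α⁻²(W₀² − W₋₁W₁), the coefficient of t₁t₂
in Q·(1⊗⋯⊗1⊗v) is α⁻²(2 − λ₁λ₂⁻¹ − λ₂λ₁⁻¹)·v, nonzero for v ≠ 0; in particular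
Q·(1⊗⋯⊗1⊗v) ≠ 1⊗⋯⊗1⊗v, and T is not isomorphic to any Ω(λ,α,h). -/
theorem tensor_not_iso_omegaH {m : ℕ} {V : Type*} [AddCommGroup V] [Module ℂ V]
    (hm : 2 ≤ m)
    (lam alpha : Fin m → ℂ) (h : Fin m → Polynomial ℂ)
    (hlam : ∀ k, lam k ≠ 0) (hinj : Function.Injective lam) (halpha : ∀ k, alpha k ≠ 0)
    (R : WRep V) (hres : WRestricted R.ρ) (hsimp : WSimple R.ρ) :
    (∀ a : ℂ, a ≠ 0 → ∀ v : V,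
      (coefV (Finsupp.single (Sum.inr (⟨0, by omega⟩ : Fin m)) 1
            + Finsupp.single (Sum.inr (⟨1, by omega⟩ : Fin m)) 1)
          (((a ^ 2)⁻¹ •
            (bigRho lam alpha h R.ρ (.W 0) * bigRho lam alpha h R.ρ (.W 0)
              - bigRho lam alpha h R.ρ (.W (-1)) * bigRho lam alpha h R.ρ (.W 1)))
            ((1 : MvPolynomial (WVars m) ℂ) ⊗ₜ[ℂ] v))
        = ((a ^ 2)⁻¹ * (2 - lam (⟨0, by omega⟩ : Fin m) * (lam (⟨1, by omega⟩ : Fin m))⁻¹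
            - lam (⟨1, by omega⟩ : Fin m) * (lam (⟨0, by omega⟩ : Fin m))⁻¹)) • v)
      ∧ (v ≠ 0 →
          (((a ^ 2)⁻¹ •
            (bigRho lam alpha h R.ρ (.W 0) * bigRho lam alpha h R.ρ (.W 0)
              - bigRho lam alpha h R.ρ (.W (-1)) * bigRho lam alpha h R.ρ (.W 1)))
            ((1 : MvPolynomial (WVars m) ℂ) ⊗ₜ[ℂ] v))
          ≠ (1 : MvPolynomial (WVars m) ℂ) ⊗ₜ[ℂ] v)) ∧
    (∀ lam' alpha' : ℂ, lam' ≠ 0 → alpha' ≠ 0 → ∀ h' : Polynomial ℂ,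
      ¬ ∃ φ : TMod m V ≃ₗ[ℂ] TensorProduct ℂ (Polynomial ℂ) (Polynomial ℂ),
          ∀ (b : WIdx) (x : TMod m V),
            φ (bigRho lam alpha h R.ρ b x) = omegaHRho lam' alpha' h' b (φ x)) := by

  classical
  set i0 : Fin m := ⟨0, by omega⟩ with hi0
  set i1 : Fin m := ⟨1, by omega⟩ with hi1
  have hne : i0 ≠ i1 := by
    intro hc
    have := congrArg Fin.val hc
    simp [hi0, hi1] at this
  have hl01 : lam i0 ≠ lam i1 := fun hc => hne (hinj hc)
  have hscal : ∀ a : ℂ, a ≠ 0 →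
      ((a ^ 2)⁻¹ * (2 - lam i0 * (lam i1)⁻¹ - lam i1 * (lam i0)⁻¹)) ≠ 0 := by
    intro a ha
    have h0 := hlam i0
    have h1 := hlam i1
    refine mul_ne_zero (inv_ne_zero (pow_ne_zero 2 ha)) ?_
    intro hc
    apply hl01
    have hc2 : (lam i0 - lam i1) ^ 2 = 0 := by
      field_simp at hc
      linear_combination -hc
    exact sub_eq_zero.mp ((pow_eq_zero_iff (by norm_num : (2:ℕ) ≠ 0)).mp hc2)
  have mainEq : ∀ a : ℂ, a ≠ 0 → ∀ v : V,
      coefV (Dex i0 i1)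
        (((a ^ 2)⁻¹ •
          (bigRho lam alpha h R.ρ (.W 0) * bigRho lam alpha h R.ρ (.W 0)
            - bigRho lam alpha h R.ρ (.W (-1)) * bigRho lam alpha h R.ρ (.W 1)))
          ((1 : MvPolynomial (WVars m) ℂ) ⊗ₜ[ℂ] v))
      = ((a ^ 2)⁻¹ * (2 - lam i0 * (lam i1)⁻¹ - lam i1 * (lam i0)⁻¹)) • v := by
    intro a ha v
    rw [LinearMap.smul_apply, LinearMap.sub_apply, Module.End.mul_apply, Module.End.mul_apply,
      map_smul, map_sub, WW_coefV lam alpha h R.ρ i0 i1 hne 0 0,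
      WW_coefV lam alpha h R.ρ i0 i1 hne 1 (-1), ← sub_smul, smul_smul]
    congr 1
    simp only [zpow_zero, zpow_one, zpow_neg_one, one_mul, mul_one]
    ring
  have mainNe : ∀ a : ℂ, a ≠ 0 → ∀ v : V, v ≠ 0 →
      (((a ^ 2)⁻¹ •
        (bigRho lam alpha h R.ρ (.W 0) * bigRho lam alpha h R.ρ (.W 0)
          - bigRho lam alpha h R.ρ (.W (-1)) * bigRho lam alpha h R.ρ (.W 1)))
        ((1 : MvPolynomial (WVars m) ℂ) ⊗ₜ[ℂ] v))
      ≠ (1 : MvPolynomial (WVars m) ℂ) ⊗ₜ[ℂ] v := by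
    intro a ha v hv hEqv
    have hcoe := congrArg (coefV (Dex i0 i1)) hEqv
    rw [mainEq a ha v, coefV_tmul, MvPolynomial.coeff_one,
      if_neg (fun hh => Dex_ne_zero i0 i1 hne hh.symm), zero_smul] at hcoe
    exact smul_ne_zero (hscal a ha) hv hcoe
  refine ⟨fun a ha v => ⟨mainEq a ha v, mainNe a ha v⟩, ?_⟩
  rintro lam' alpha' hl' ha' h' ⟨φ, hφ⟩
  obtain ⟨v, hv⟩ := hsimp.1
  apply mainNe alpha' ha' v hv
  have hQ : bigRho lam alpha h R.ρ (.W 0) (bigRho lam alpha h R.ρ (.W 0)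
        ((1 : MvPolynomial (WVars m) ℂ) ⊗ₜ[ℂ] v))
      - bigRho lam alpha h R.ρ (.W (-1)) (bigRho lam alpha h R.ρ (.W 1)
        ((1 : MvPolynomial (WVars m) ℂ) ⊗ₜ[ℂ] v))
      = (alpha' ^ 2) • ((1 : MvPolynomial (WVars m) ℂ) ⊗ₜ[ℂ] v) := by
    apply φ.injective
    rw [map_sub, map_smul, hφ, hφ, hφ, hφ, omegaQ lam' alpha' hl' h']
  rw [LinearMap.smul_apply, LinearMap.sub_apply, Module.End.mul_apply, Module.End.mul_apply,
    hQ, smul_smul, inv_mul_cancel₀ (pow_ne_zero 2 ha'), one_smul]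
end
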